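/- Let Φ₁(x₁,z) = z₂ x₁^m ω(x₁) + z₂² x₁ q(x₁,z₂) + z₁ x₁, where ω, q are smooth functions defined for x₁ and z₂ near 0, ω(0) ≠ 0, and m ≥ 2 is an integer. Then there is a constant C such that for every smooth amplitude a(x₁,z₂) supported in a sufficiently small neighborhood of the origin, the integral I₁(λ,z) = ∫_ℝ e^{iλΦ₁(x₁,z)} a(x₁,z₂) dx₁ satisfies |I₁(λ,z)| ≤ C/(1 + λ|z₁|) for all λ > 1 and all small z = (z₁,z₂) with |z₁| ≥ |z₂|; consequently |I₁(λ,z)| ≤ C' |z₁ z₂|^{−1/4} λ^{−1/2} on the same region for z₁, z₂ ≠ 0. -/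

import Mathlib

open MeasureTheory Complex Real ENNReal

set_option maxHeartbeats 1000000

noncomputable section

/-- The one-dimensional oscillatory integral
`I₁(λ, z) = ∫_ℝ e^{iλΦ(x₁,z)} a(x₁,z₂) dx₁`. -/
def oscInt1 (Φ : ℝ → ℝ × ℝ → ℝ) (a : ℝ × ℝ → ℂ) (l : ℝ) (z : ℝ × ℝ) : ℂ :=
  ∫ x₁ : ℝ, Complex.exp (Complex.I * (l * Φ x₁ z : ℝ)) * a (x₁, z.2)

/-- Derivative of a one-variable slice of a differentiable function on `ℝ × ℝ`. -/
private lemma sliceDeriv {E : Type*} [NormedAddCommGroup E] [NormedSpace ℝ E]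
    (F : ℝ × ℝ → E) (hF : Differentiable ℝ F) (y t : ℝ) :
    HasDerivAt (fun s => F (s, y)) (fderiv ℝ F (t, y) (1, 0)) t := by
  have h1 : HasFDerivAt F (fderiv ℝ F (t, y)) (t, y) := (hF (t, y)).hasFDerivAt
  have h2 : HasDerivAt (fun s : ℝ => ((s, y) : ℝ × ℝ)) ((1 : ℝ), (0 : ℝ)) t :=
    (hasDerivAt_id t).prodMk (hasDerivAt_const t y)
  exact h1.comp_hasDerivAt t h2

/-- for the phase
`Φ₁(x₁,z) = z₂x₁^m ω(x₁) + z₂²x₁ q(x₁,z₂) + z₁x₁` with `ω(0) ≠ 0` and `m ≥ 2`,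
every smooth amplitude `a` supported in a small enough neighborhood of the origin
satisfies `|I₁(λ,z)| ≤ C/(1 + λ|z₁|)` for `λ > 1` and small `z` with `|z₁| ≥ |z₂|`;
consequently `|I₁(λ,z)| ≤ C' |z₁z₂|^{−1/4} λ^{−1/2}` on the same region when
`z₁, z₂ ≠ 0`. -/
theorem oscInt1_decay_typeII_region
    (ω : ℝ → ℝ) (q : ℝ × ℝ → ℝ) (m : ℕ) (hm : 2 ≤ m)
    (hω : ContDiff ℝ (⊤ : ℕ∞) ω) (hq : ContDiff ℝ (⊤ : ℕ∞) q) (hω0 : ω 0 ≠ 0)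
    (Φ : ℝ → ℝ × ℝ → ℝ)
    (hΦ : ∀ (x₁ : ℝ) (z : ℝ × ℝ), Φ x₁ z =
      z.2 * x₁ ^ m * ω x₁ + z.2 ^ 2 * x₁ * q (x₁, z.2) + z.1 * x₁) :
    ∃ r > (0 : ℝ),
      ∀ a : ℝ × ℝ → ℂ, ContDiff ℝ (⊤ : ℕ∞) a → HasCompactSupport a →
        tsupport a ⊆ Metric.ball (0, 0) r →
        (∃ C : ℝ, ∀ l : ℝ, 1 < l → ∀ z : ℝ × ℝ,
          |z.1| < r → |z.2| < r → |z.2| ≤ |z.1| →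
          ‖oscInt1 Φ a l z‖ ≤ C / (1 + l * |z.1|)) ∧
        (∃ C' : ℝ, ∀ l : ℝ, 1 < l → ∀ z : ℝ × ℝ,
          |z.1| < r → |z.2| < r → |z.2| ≤ |z.1| → z.1 ≠ 0 → z.2 ≠ 0 →
          ‖oscInt1 Φ a l z‖ ≤ C' * |z.1 * z.2| ^ (-(1 / 4 : ℝ)) * l ^ (-(1 / 2 : ℝ))) := by
  -- the auxiliary smooth function H with Φ x z = z.2 * H (x, z.2) + z.1 * x
  set H : ℝ × ℝ → ℝ := fun p => p.1 ^ m * ω p.1 + p.2 * p.1 * q p with hHdef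
  have hH : ContDiff ℝ (⊤ : ℕ∞) H := by
    apply ContDiff.add
    · exact (contDiff_fst.pow m).mul (hω.comp contDiff_fst)
    · exact (contDiff_snd.mul contDiff_fst).mul hq
  have hHd : Differentiable ℝ H := hH.differentiable (by simp)
  set G : ℝ × ℝ → ℝ := fun p => fderiv ℝ H p (1, 0) with hGdef
  have hGsm : ContDiff ℝ (⊤ : ℕ∞) G := ((hH.fderiv_right (m := (⊤ : ℕ∞)) (by simp)).clm_apply contDiff_const : ContDiff ℝ (⊤ : ℕ∞) G)
  have hGd : Differentiable ℝ G := hGsm.differentiable (by simp)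
  have hGc : Continuous G := hGsm.continuous
  set G2 : ℝ × ℝ → ℝ := fun p => fderiv ℝ G p (1, 0) with hG2def
  have hG2c : Continuous G2 :=
    (((hGsm.fderiv_right (m := (⊤ : ℕ∞)) (by simp)).clm_apply contDiff_const : ContDiff ℝ (⊤ : ℕ∞) _)).continuous
  -- G (0,0) = 0
  have hG00 : G (0, 0) = 0 := by
    have h1 : HasDerivAt (fun s : ℝ => H (s, 0)) (G (0, 0)) 0 := sliceDeriv H hHd 0 0
    have h2 : HasDerivAt (fun s : ℝ => H (s, 0)) 0 0 := by
      have hp : HasDerivAt (fun s : ℝ => s ^ m * ω s)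
          ((m : ℝ) * (0 : ℝ) ^ (m - 1) * ω 0 + (0 : ℝ) ^ m * deriv ω 0) 0 :=
        (hasDerivAt_pow m 0).mul (hω.differentiable (by simp) 0).hasDerivAt
      have hz : ((m : ℝ) * (0 : ℝ) ^ (m - 1) * ω 0 + (0 : ℝ) ^ m * deriv ω 0) = 0 := by
        rw [zero_pow (by omega : m - 1 ≠ 0), zero_pow (by omega : m ≠ 0)]; ring
      rw [hz] at hp
      have heq : (fun s : ℝ => H (s, 0)) = fun s : ℝ => s ^ m * ω s := by
        funext s; simp [hHdef]
      rw [heq]; exact hp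
    exact h1.unique h2
  -- bound for G2 on the unit ball
  obtain ⟨C₂, hC₂⟩ : ∃ C₂, ∀ p ∈ Metric.closedBall (0 : ℝ × ℝ) 1, ‖G2 p‖ ≤ C₂ :=
    (isCompact_closedBall _ _).exists_bound_of_continuousOn hG2c.continuousOn
  have hC₂0 : 0 ≤ C₂ := le_trans (norm_nonneg _) (hC₂ 0 (by simp))
  -- smallness of G near the origin
  obtain ⟨δ, hδpos, hδ⟩ : ∃ δ > 0, ∀ p : ℝ × ℝ, dist p (0, 0) < δ → |G p| < 1 / 2 := by
    have hc := hGc.continuousAt (x := ((0 : ℝ), (0 : ℝ)))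
    rw [Metric.continuousAt_iff] at hc
    obtain ⟨δ, hδ, h⟩ := hc (1 / 2) (by norm_num)
    refine ⟨δ, hδ, fun p hp => ?_⟩
    have := h hp
    rwa [hG00, Real.dist_eq, sub_zero] at this
  set r : ℝ := min δ 1 / 2 with hrdef
  have hr : 0 < r := by positivity
  have hr1 : r ≤ 1 / 2 := by
    rw [hrdef]; have := min_le_right δ 1; linarith
  have hrδ : r < δ := by
    rw [hrdef]; have := min_le_left δ 1; have := lt_min hδpos one_pos
    rcases le_total δ 1 with h | h
    · rw [min_eq_left h]; linarith
    · rw [min_eq_right h]; linarith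
  have hmemd : ∀ x y : ℝ, |x| ≤ r → |y| ≤ r → dist ((x, y) : ℝ × ℝ) (0, 0) ≤ r := by
    intro x y hx hy
    rw [Prod.dist_eq]
    simp only [Real.dist_eq, sub_zero]
    exact max_le hx hy
  refine ⟨r, hr, ?_⟩
  intro a ha hac hsupp
  have had : Differentiable ℝ a := ha.differentiable (by simp)
  set Da : ℝ × ℝ → ℂ := fun p => fderiv ℝ a p (1, 0) with hDadef
  have hDac : Continuous Da := (((ha.fderiv_right (m := (⊤ : ℕ∞)) (by simp)).clm_apply contDiff_const : ContDiff ℝ (⊤ : ℕ∞) _)).continuous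
  obtain ⟨A₀, hA₀⟩ : ∃ A, ∀ p, ‖a p‖ ≤ A := hac.exists_bound_of_continuous ha.continuous
  have hA₀0 : 0 ≤ A₀ := le_trans (norm_nonneg _) (hA₀ 0)
  have hDacs : HasCompactSupport Da := by
    have h := hac.fderiv (𝕜 := ℝ)
    exact h.comp_left (g := fun L : ℝ × ℝ →L[ℝ] ℂ => L (1, 0)) rfl
  obtain ⟨A₁, hA₁⟩ : ∃ A, ∀ p, ‖Da p‖ ≤ A := hDacs.exists_bound_of_continuous hDac
  have hA₁0 : 0 ≤ A₁ := le_trans (norm_nonneg _) (hA₁ 0)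
  set K : ℝ := 8 * A₁ + 4 * A₀ * C₂ with hKdef
  have hK0 : 0 ≤ K := by positivity
  set C : ℝ := 4 * r * A₀ + 4 * r * K with hCdef
  have hC0 : 0 ≤ C := by positivity
  have main : ∀ l : ℝ, 1 < l → ∀ z : ℝ × ℝ,
      |z.1| < r → |z.2| < r → |z.2| ≤ |z.1| →
      ‖oscInt1 Φ a l z‖ ≤ C / (1 + l * |z.1|) := by
    intro l hl z hz1 hz2 hz21
    have hl0 : 0 < l := by linarith
    have hL0 : 0 ≤ l * |z.1| := by positivity
    -- the phase and its derivatives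
    set ph : ℝ → ℝ := fun x => z.2 * H (x, z.2) + z.1 * x with hphdef
    set ph' : ℝ → ℝ := fun x => z.2 * G (x, z.2) + z.1 with hph'def
    set ph'' : ℝ → ℝ := fun x => z.2 * G2 (x, z.2) with hph''def
    have hphΦ : ∀ x, Φ x z = ph x := by
      intro x; rw [hΦ, hphdef]; simp only [hHdef]; ring
    have hd1 : ∀ x, HasDerivAt ph (ph' x) x := by
      intro x
      have h1 := (sliceDeriv H hHd z.2 x).const_mul z.2
      have h2 := (hasDerivAt_id x).const_mul z.1
      rw [hphdef, hph'def]
      simpa [hGdef, Pi.add_def] using h1.add h2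
    have hd2 : ∀ x, HasDerivAt ph' (ph'' x) x := by
      intro x
      have h1 := (sliceDeriv G hGd z.2 x).const_mul z.2
      rw [hph'def, hph''def]
      simpa [hG2def] using h1.add_const z.1
    have hcontph' : Continuous ph' := by
      rw [hph'def]
      exact (continuous_const.mul (hGc.comp (continuous_id.prodMk continuous_const))).add
        continuous_const
    have hcontph'' : Continuous ph'' := by
      rw [hph''def]
      exact continuous_const.mul (hG2c.comp (continuous_id.prodMk continuous_const))
    -- pointwise bounds on the interval
    have hGsmall : ∀ x : ℝ, |x| ≤ r → |G (x, z.2)| ≤ 1 / 2 := fun x hx =>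
      le_of_lt (hδ _ (lt_of_le_of_lt (hmemd x z.2 hx hz2.le) hrδ))
    have hplow : ∀ x : ℝ, |x| ≤ r → |z.1| / 2 ≤ |ph' x| := by
      intro x hx
      have h1 : |z.2 * G (x, z.2)| ≤ |z.1| / 2 := by
        rw [abs_mul]
        calc |z.2| * |G (x, z.2)| ≤ |z.1| * (1 / 2) :=
              mul_le_mul hz21 (hGsmall x hx) (abs_nonneg _) (abs_nonneg _)
          _ = |z.1| / 2 := by ring
      have h2 : |z.1| ≤ |ph' x| + |z.2 * G (x, z.2)| := by
        have h3 := abs_add_le (z.2 * G (x, z.2) + z.1) (-(z.2 * G (x, z.2)))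
        simp only [add_neg_cancel_left, abs_neg] at h3
        simpa [hph'def] using h3
      linarith
    have hphigh : ∀ x : ℝ, |x| ≤ r → |ph' x| ≤ 3 / 2 * |z.1| := by
      intro x hx
      have h1 : |z.2 * G (x, z.2)| ≤ |z.1| / 2 := by
        rw [abs_mul]
        calc |z.2| * |G (x, z.2)| ≤ |z.1| * (1 / 2) :=
              mul_le_mul hz21 (hGsmall x hx) (abs_nonneg _) (abs_nonneg _)
          _ = |z.1| / 2 := by ring
      have h2 : |ph' x| ≤ |z.2 * G (x, z.2)| + |z.1| := by
        rw [hph'def]; exact abs_add_le _ _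
      linarith
    have hp''bnd : ∀ x : ℝ, |x| ≤ r → |ph'' x| ≤ C₂ * |z.1| := by
      intro x hx
      have hmem2 : ((x, z.2) : ℝ × ℝ) ∈ Metric.closedBall (0 : ℝ × ℝ) 1 := by
        rw [Metric.mem_closedBall]
        calc dist ((x, z.2) : ℝ × ℝ) 0 = dist ((x, z.2) : ℝ × ℝ) (0, 0) := rfl
          _ ≤ r := hmemd x z.2 hx hz2.le
          _ ≤ 1 := by linarith
      have := hC₂ _ hmem2
      rw [hph''def, abs_mul]
      calc |z.2| * |G2 (x, z.2)| ≤ |z.1| * C₂ :=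
            mul_le_mul hz21 (by simpa using this) (abs_nonneg _) (abs_nonneg _)
        _ = C₂ * |z.1| := by ring
    -- the oscillating factor
    set E : ℝ → ℂ := fun x => Complex.exp (Complex.I * ((l * ph x : ℝ) : ℂ)) with hEdef
    have hEnorm : ∀ x, ‖E x‖ = 1 := by
      intro x
      rw [hEdef]
      simp [Complex.norm_exp]
    have hEderiv : ∀ x, HasDerivAt E (Complex.I * l * ((ph' x : ℝ) : ℂ) * E x) x := by
      intro x
      have h1 : HasDerivAt (fun t => Complex.I * ((l * ph t : ℝ) : ℂ))
          (Complex.I * ((l * ph' x : ℝ) : ℂ)) x :=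
        (((hd1 x).const_mul l).ofReal_comp).const_mul Complex.I
      have h2 := h1.cexp
      rw [hEdef]
      convert h2 using 1
      push_cast
      ring
    have hcontE : Continuous E := by
      rw [hEdef]
      exact Complex.continuous_exp.comp (continuous_const.mul
        (Complex.continuous_ofReal.comp (continuous_const.mul
          ((continuous_const.mul (hH.continuous.comp
            (continuous_id.prodMk continuous_const))).add
            (continuous_const.mul continuous_id)))))
    -- support of the amplitude
    have hsupp0 : ∀ x : ℝ, r ≤ |x| → a (x, z.2) = 0 := by
      intro x hx
      apply image_eq_zero_of_notMem_tsupport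
      intro hmem'
      have h := hsupp hmem'
      rw [Metric.mem_ball, Prod.dist_eq] at h
      simp only [Real.dist_eq, sub_zero] at h
      have := le_max_left |x| |z.2|
      have := max_lt_iff.mp h
      linarith [this.1]
    -- reduction to the interval [-r, r]
    have hosc : oscInt1 Φ a l z = ∫ x in (-r)..r, E x * a (x, z.2) := by
      rw [oscInt1]
      have h1 : (fun x : ℝ => Complex.exp (Complex.I * ((l * Φ x z : ℝ) : ℂ)) * a (x, z.2))
          = fun x => E x * a (x, z.2) := by
        funext x; rw [hEdef, hphΦ x]
      rw [h1, intervalIntegral.integral_of_le (by linarith : -r ≤ r)]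
      symm
      apply setIntegral_eq_integral_of_forall_compl_eq_zero
      intro x hx
      have hxr : r ≤ |x| := by
        simp only [Set.mem_Ioc, not_and_or, not_lt, not_le] at hx
        rcases hx with h | h
        · rw [_root_.abs_of_nonpos (by linarith)]; linarith
        · rw [_root_.abs_of_pos (by linarith)]; linarith
      rw [hsupp0 x hxr, mul_zero]
    -- trivial estimate
    have htriv : ‖oscInt1 Φ a l z‖ ≤ A₀ * (2 * r) := by
      rw [hosc]
      have h := intervalIntegral.norm_integral_le_of_norm_le_const
        (C := A₀) (f := fun x => E x * a (x, z.2)) (a := -r) (b := r)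
        (fun x _ => by rw [norm_mul, hEnorm, one_mul]; exact hA₀ _)
      calc ‖∫ x in (-r)..r, E x * a (x, z.2)‖ ≤ A₀ * |r - (-r)| := h
        _ = A₀ * (2 * r) := by rw [_root_.abs_of_nonneg (by linarith)]; ring
    rcases le_or_gt (l * |z.1|) 1 with hL | hL
    · -- small l * |z.1| : use the trivial bound
      rw [le_div_iff₀ (by linarith : (0 : ℝ) < 1 + l * |z.1|)]
      calc ‖oscInt1 Φ a l z‖ * (1 + l * |z.1|) ≤ (A₀ * (2 * r)) * (1 + l * |z.1|) := by
            apply mul_le_mul_of_nonneg_right htriv (by linarith)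
        _ ≤ (A₀ * (2 * r)) * 2 := by
            apply mul_le_mul_of_nonneg_left (by linarith) (by positivity)
        _ ≤ C := by rw [hCdef]; nlinarith
    · -- large l * |z.1| : integrate by parts
      have hZ : 0 < |z.1| := by nlinarith [abs_nonneg z.1]
      set Z : ℝ := |z.1| with hZdef
      -- the denominator
      set d : ℝ → ℂ := fun x => Complex.I * l * ((ph' x : ℝ) : ℂ) with hddef
      have hdnorm : ∀ x, ‖d x‖ = l * |ph' x| := by
        intro x
        rw [hddef]
        simp [_root_.abs_of_pos hl0]
      have hdne : ∀ x : ℝ, |x| ≤ r → d x ≠ 0 := by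
        intro x hx h0
        have h1 := hdnorm x
        rw [h0, norm_zero] at h1
        have h2 := hplow x hx
        nlinarith
      have hcontd : Continuous d := by
        rw [hddef]
        exact continuous_const.mul (Complex.continuous_ofReal.comp hcontph')
      have hconta : Continuous (fun x : ℝ => a (x, z.2)) :=
        ha.continuous.comp (continuous_id.prodMk continuous_const)
      have hcontDa : Continuous (fun x : ℝ => Da (x, z.2)) :=
        hDac.comp (continuous_id.prodMk continuous_const)
      have hcontd2 : Continuous (fun x : ℝ => Complex.I * l * ((ph'' x : ℝ) : ℂ)) :=
        continuous_const.mul (Complex.continuous_ofReal.comp hcontph'')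
      set g : ℝ → ℂ := fun x => a (x, z.2) / d x with hgdef
      set g' : ℝ → ℂ := fun x =>
        (Da (x, z.2) * d x - a (x, z.2) * (Complex.I * l * ((ph'' x : ℝ) : ℂ))) / d x ^ 2
        with hg'def
      have habs : ∀ x : ℝ, x ∈ Set.uIcc (-r) r → |x| ≤ r := by
        intro x hx
        rw [Set.uIcc_of_le (by linarith : -r ≤ r)] at hx
        rw [abs_le]; exact ⟨hx.1, hx.2⟩
      have hddiff : ∀ x : ℝ, HasDerivAt d (Complex.I * l * ((ph'' x : ℝ) : ℂ)) x := by
        intro x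
        rw [hddef]
        exact ((hd2 x).ofReal_comp).const_mul (Complex.I * l)
      have hg : ∀ x ∈ Set.uIcc (-r) r, HasDerivAt g (g' x) x := by
        intro x hx
        have hnum : HasDerivAt (fun t => a (t, z.2)) (Da (x, z.2)) x := by
          simpa [hDadef] using sliceDeriv a had z.2 x
        have hden := hddiff x
        have hdiv := hnum.div hden (hdne x (habs x hx))
        rw [hgdef, hg'def]
        exact hdiv
      have hEd : ∀ x ∈ Set.uIcc (-r) r, HasDerivAt E (d x * E x) x := by
        intro x _
        simpa [hddef] using hEderiv x
      have hintg' : IntervalIntegrable g' volume (-r) r := by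
        apply ContinuousOn.intervalIntegrable
        rw [hg'def]
        exact (((hcontDa.mul hcontd).sub (hconta.mul hcontd2)).continuousOn).div
          ((hcontd.pow 2).continuousOn)
          (fun x hx => pow_ne_zero 2 (hdne x (habs x hx)))
      have hintEd : IntervalIntegrable (fun x => d x * E x) volume (-r) r :=
        (hcontd.mul hcontE).intervalIntegrable _ _
      have hparts := intervalIntegral.integral_mul_deriv_eq_deriv_mul
        (u := g) (u' := g') (v := E) (v' := fun x => d x * E x) hg hEd hintg' hintEd
      have hgr : g r = 0 := by
        rw [hgdef]
        have ha0 : a (r, z.2) = 0 := hsupp0 r (by rw [_root_.abs_of_pos hr])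
        simp [ha0]
      have hgmr : g (-r) = 0 := by
        rw [hgdef]
        have ha0 : a (-r, z.2) = 0 := hsupp0 (-r) (by rw [abs_neg, _root_.abs_of_pos hr])
        simp [ha0]
      have hEq : Set.EqOn (fun x => E x * a (x, z.2)) (fun x => g x * (d x * E x))
          (Set.uIcc (-r) r) := by
        intro x hx
        have hd0 := hdne x (habs x hx)
        rw [hgdef]
        field_simp
      have hosc2 : oscInt1 Φ a l z = -∫ x in (-r)..r, g' x * E x := by
        rw [hosc, intervalIntegral.integral_congr hEq, hparts, hgr, hgmr]
        simp
      have hg'bnd : ∀ x : ℝ, |x| ≤ r → ‖g' x‖ ≤ K / (l * Z) := by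
        intro x hx
        have hplo := hplow x hx
        have hphi := hphigh x hx
        have hp'' := hp''bnd x hx
        have hnum : ‖Da (x, z.2) * d x - a (x, z.2) * (Complex.I * l * ((ph'' x : ℝ) : ℂ))‖
            ≤ A₁ * (l * (3 / 2 * Z)) + A₀ * (l * (C₂ * Z)) := by
          have hdx : ‖d x‖ ≤ l * (3 / 2 * Z) := by
            rw [hdnorm x]; nlinarith
          have h2 : ‖Complex.I * l * ((ph'' x : ℝ) : ℂ)‖ ≤ l * (C₂ * Z) := by
            have h2a : ‖Complex.I * l * ((ph'' x : ℝ) : ℂ)‖ = l * |ph'' x| := by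
              simp [_root_.abs_of_pos hl0]
            rw [h2a]; nlinarith
          calc ‖Da (x, z.2) * d x - a (x, z.2) * (Complex.I * l * ((ph'' x : ℝ) : ℂ))‖
              ≤ ‖Da (x, z.2) * d x‖ + ‖a (x, z.2) * (Complex.I * l * ((ph'' x : ℝ) : ℂ))‖ :=
                norm_sub_le _ _
            _ ≤ A₁ * (l * (3 / 2 * Z)) + A₀ * (l * (C₂ * Z)) :=
                add_le_add
                  ((norm_mul_le _ _).trans
                    (mul_le_mul (hA₁ _) hdx (norm_nonneg _) hA₁0))
                  ((norm_mul_le _ _).trans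
                    (mul_le_mul (hA₀ _) h2 (norm_nonneg _) hA₀0))
        have hdlow : (l * (Z / 2)) ^ 2 ≤ ‖d x ^ 2‖ := by
          rw [norm_pow, hdnorm x]
          have h3 : l * (Z / 2) ≤ l * |ph' x| := by nlinarith
          exact pow_le_pow_left₀ (by positivity) h3 2
        have hg'eq : ‖g' x‖
            = ‖Da (x, z.2) * d x - a (x, z.2) * (Complex.I * l * ((ph'' x : ℝ) : ℂ))‖
              / ‖d x ^ 2‖ := by
          rw [hg'def, norm_div]
        rw [hg'eq]
        calc ‖Da (x, z.2) * d x - a (x, z.2) * (Complex.I * l * ((ph'' x : ℝ) : ℂ))‖ / ‖d x ^ 2‖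
            ≤ (A₁ * (l * (3 / 2 * Z)) + A₀ * (l * (C₂ * Z))) / ((l * (Z / 2)) ^ 2) :=
              div_le_div₀ (by positivity) hnum (by positivity) hdlow
          _ ≤ K / (l * Z) := by
              rw [div_le_div_iff₀ (by positivity) (by positivity), hKdef]
              nlinarith [mul_nonneg hA₁0 (sq_nonneg (l * Z))]
      have hfin : ‖oscInt1 Φ a l z‖ ≤ K / (l * Z) * (2 * r) := by
        rw [hosc2, norm_neg]
        have h := intervalIntegral.norm_integral_le_of_norm_le_const
          (C := K / (l * Z)) (f := fun x => g' x * E x) (a := -r) (b := r)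
          (fun x hx => by
            have hx' : |x| ≤ r := by
              rw [Set.uIoc_of_le (by linarith : -r ≤ r)] at hx
              rw [abs_le]; exact ⟨hx.1.le, hx.2⟩
            rw [norm_mul, hEnorm, mul_one]
            exact hg'bnd x hx')
        calc ‖∫ x in (-r)..r, g' x * E x‖ ≤ K / (l * Z) * |r - (-r)| := h
          _ = K / (l * Z) * (2 * r) := by rw [_root_.abs_of_nonneg (by linarith)]; ring
      calc ‖oscInt1 Φ a l z‖ ≤ K / (l * Z) * (2 * r) := hfin
        _ ≤ C / (1 + l * Z) := by
            rw [div_mul_eq_mul_div, div_le_div_iff₀ (by positivity) (by nlinarith), hCdef]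
            nlinarith [mul_nonneg (mul_nonneg hr.le hK0) (by linarith : (0:ℝ) ≤ l * Z - 1),
              mul_nonneg (mul_nonneg hr.le hA₀0) (by linarith : (0:ℝ) ≤ l * Z)]

  refine ⟨⟨C, main⟩, ⟨C, ?_⟩⟩
  intro l hl z hz1 hz2 hz21 h1ne h2ne
  have hbase := main l hl z hz1 hz2 hz21
  have hl0 : 0 < l := by linarith
  have hZ : 0 < |z.1| := abs_pos.mpr h1ne
  have hu : 0 < |z.1 * z.2| := abs_pos.mpr (mul_ne_zero h1ne h2ne)
  set L : ℝ := l * |z.1| with hLdef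
  have hL0 : 0 < L := by positivity
  -- |z.1 z.2|^{1/4} * l^{1/2} ≤ 1 + L
  have key : |z.1 * z.2| ^ ((1 : ℝ) / 4) * l ^ ((1 : ℝ) / 2) ≤ 1 + L := by
    have h1 : |z.1 * z.2| ≤ |z.1| ^ 2 := by
      rw [abs_mul, sq]
      exact mul_le_mul_of_nonneg_left hz21 (abs_nonneg _)
    have h2 : |z.1 * z.2| ^ ((1 : ℝ) / 4) ≤ (|z.1| ^ 2) ^ ((1 : ℝ) / 4) :=
      Real.rpow_le_rpow (abs_nonneg _) h1 (by norm_num)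
    have h3 : (|z.1| ^ 2) ^ ((1 : ℝ) / 4) = |z.1| ^ ((1 : ℝ) / 2) := by
      rw [← Real.rpow_natCast |z.1| 2, ← Real.rpow_mul (abs_nonneg _)]
      norm_num
    have h4 : |z.1 * z.2| ^ ((1 : ℝ) / 4) * l ^ ((1 : ℝ) / 2)
        ≤ |z.1| ^ ((1 : ℝ) / 2) * l ^ ((1 : ℝ) / 2) := by
      apply mul_le_mul_of_nonneg_right _ (Real.rpow_nonneg hl0.le _)
      rw [← h3]; exact h2
    have h5 : |z.1| ^ ((1 : ℝ) / 2) * l ^ ((1 : ℝ) / 2) = L ^ ((1 : ℝ) / 2) := by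
      rw [hLdef, Real.mul_rpow hl0.le (abs_nonneg _)]; ring
    have h6 : L ^ ((1 : ℝ) / 2) ≤ 1 + L := by
      rw [← Real.sqrt_eq_rpow]
      nlinarith [Real.sq_sqrt hL0.le, Real.sqrt_nonneg L]
    calc |z.1 * z.2| ^ ((1 : ℝ) / 4) * l ^ ((1 : ℝ) / 2)
        ≤ |z.1| ^ ((1 : ℝ) / 2) * l ^ ((1 : ℝ) / 2) := h4
      _ = L ^ ((1 : ℝ) / 2) := h5
      _ ≤ 1 + L := h6
  have hpos : 0 < |z.1 * z.2| ^ ((1 : ℝ) / 4) * l ^ ((1 : ℝ) / 2) := by positivity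
  have heq : C * |z.1 * z.2| ^ (-(1 / 4 : ℝ)) * l ^ (-(1 / 2 : ℝ))
      = C / (|z.1 * z.2| ^ ((1 : ℝ) / 4) * l ^ ((1 : ℝ) / 2)) := by
    rw [Real.rpow_neg (abs_nonneg _), Real.rpow_neg hl0.le]
    field_simp
  rw [heq]
  calc ‖oscInt1 Φ a l z‖ ≤ C / (1 + L) := hbase
    _ ≤ C / (|z.1 * z.2| ^ ((1 : ℝ) / 4) * l ^ ((1 : ℝ) / 2)) := by
        rw [div_le_div_iff₀ (by linarith : (0:ℝ) < 1 + L) hpos]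
        exact mul_le_mul_of_nonneg_left key hC0

end
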